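/- arXiv:0906.2763 — 2 statements merged into one kernel-verified Lean document; each statement's English description precedes it below -/
import Mathlib

section
/- For all n ≥ m ≥ 0 and all λ ∈ ℂ, the first moment of the characteristic polynomial of the unrescaled complex sample covariance matrix satisfies E det(λ I_m − X(n,m)* X(n,m)) = (−1)^m · m! · L_m^{(n−m)}(λ). -/
/-!
Expanding `det (λ • 1 - A)` in principal minors reduces the claim to the expectation of a Gram
determinant `det (Yᴴ * Y)` of an `n × k` matrix `Y` with independent centred entries of unit
second absolute moment. Writing each entry of `Yᴴ * Y` as a sum over rows, the Leibniz formula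
gives a sum over permutations `σ` and row choices `r`; by independence the expectation of each
term is `sign σ` if `r ∘ σ⁻¹ = r` and `0` otherwise. The signed sum over `σ` is the determinant of
the `0/1` matrix `[r j = r k]`, hence `1` if `r` is injective and `0` otherwise, so
`E det (Yᴴ * Y) = n (n - 1) ⋯ (n - k + 1)`. Summing over minors gives
`∑ₖ (-1)ᵏ λ^(m-k) (m choose k) n (n - 1) ⋯ (n - k + 1)`, which is the Laguerre expression.
-/

open MeasureTheory ProbabilityTheory Matrix

noncomputable section

/-- The law of a complex random variable whose real and imaginary parts are independent,
each with distribution `Q`. -/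
def complexLaw (Q : Measure ℝ) : Measure ℂ :=
  (Q.prod Q).map fun p => (p.1 : ℂ) + p.2 * Complex.I

/-- The `n × m` upper-left corner matrix built from the doubly-indexed family of entries. -/
def entryMat {Ω : Type*} {𝕜 : Type*} (X : ℕ → ℕ → Ω → 𝕜) (n m : ℕ) (ω : Ω) :
    Matrix (Fin n) (Fin m) 𝕜 :=
  Matrix.of fun i j => X i j ω

/-- The Laguerre polynomial `L_m^{(α)}(x) = ∑_{ν=0}^{m} C(m+α, m−ν) (−x)^ν / ν!`. -/
def laguerre (m α : ℕ) (x : ℂ) : ℂ :=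
  ∑ ν ∈ Finset.range (m + 1), ((m + α).choose (m - ν) : ℂ) * (-x) ^ ν / (ν.factorial : ℂ)

namespace Matrix

variable {R : Type*} [CommRing R] {n : Type*} [Fintype n] [DecidableEq n]

theorem det_smul_one_sub_eq_sum_minors (M : Matrix n n R) (t : R) :
    (t • (1 : Matrix n n R) - M).det =
      ∑ k ∈ Finset.range (Fintype.card n + 1), (-1) ^ k * t ^ (Fintype.card n - k) *
        ∑ s ∈ Finset.univ.powersetCard k, (M.submatrix (Subtype.val : s → n) Subtype.val).det := by
  nontriviality R
  rw [smul_one_eq_diagonal, ← scalar_apply, ← eval_charpoly, Polynomial.eval_eq_sum_range,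
    charpoly_natDegree_eq_dim, ← Finset.sum_range_reflect]
  refine Finset.sum_congr rfl fun k hk => ?_
  replace hk := Finset.mem_range_succ_iff.mp hk
  rw [Nat.add_sub_cancel, charpoly_coeff_eq_sum_minors M k hk]
  ring

theorem det_conjTranspose_mul_self_eq_sum [StarRing R] {κ ρ : Type*} [Fintype κ] [DecidableEq κ]
    [Fintype ρ] (Y : Matrix ρ κ R) :
    (Yᴴ * Y).det = ∑ σ : Equiv.Perm κ, ∑ r : κ → ρ,
      (Equiv.Perm.sign σ : R) * ∏ k, star (Y (r (σ.symm k)) k) * Y (r k) k := by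
  rw [det_apply']
  refine Finset.sum_congr rfl fun σ _ => ?_
  simp only [mul_apply, conjTranspose_apply, Finset.prod_univ_sum, Fintype.piFinset_univ,
    Finset.mul_sum]
  refine Finset.sum_congr rfl fun r _ => ?_
  rw [Finset.prod_mul_distrib, Finset.prod_mul_distrib,
    ← Equiv.prod_comp σ fun k => star (Y (r (σ.symm k)) k)]
  simp

end Matrix

theorem Equiv.Perm.sum_sign_mul_ite_comp_symm_eq {R κ ρ : Type*} [CommRing R] [Fintype κ]
    [DecidableEq κ] [DecidableEq ρ] (r : κ → ρ) :
    ∑ σ : Perm κ, (sign σ : R) * (if (fun k => r (σ.symm k)) = r then 1 else 0) =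
      if Function.Injective r then 1 else 0 := by
  calc _ = (Matrix.of fun j k => if r k = r j then (1 : R) else 0).det := by
        rw [Matrix.det_apply']
        refine Finset.sum_congr rfl fun σ _ => ?_
        simp only [Matrix.of_apply, Fintype.prod_boole, funext_iff]
        congr 2
        exact propext ⟨fun h k => by simpa using h (σ k), fun h k => by simpa using h (σ.symm k)⟩
    _ = _ := by
        split_ifs with hr
        · rw [← Matrix.det_one (n := κ) (R := R)]
          congr 1
          ext j k
          simp [Matrix.one_apply, hr.eq_iff, eq_comm]
        · obtain ⟨a, b, hab, hne⟩ := Function.not_injective_iff.mp hr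
          exact Matrix.det_zero_of_row_eq hne (funext fun k => by simp [hab])

theorem neg_one_pow_mul_factorial_mul_laguerre {m n : ℕ} (hmn : m ≤ n) (x : ℂ) :
    (-1) ^ m * (m.factorial : ℂ) * laguerre m (n - m) x =
      ∑ k ∈ Finset.range (m + 1),
        (-1) ^ k * x ^ (m - k) * (m.choose k * n.descFactorial k : ℕ) := by
  rw [laguerre, Nat.add_sub_cancel' hmn, Finset.mul_sum, ← Finset.sum_range_reflect]
  refine Finset.sum_congr rfl fun k hk => ?_
  replace hk := Finset.mem_range_succ_iff.mp hk
  have hfac : (m.choose k * k.factorial * (m - k).factorial : ℂ) = m.factorial := by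
    exact_mod_cast Nat.choose_mul_factorial_mul_factorial hk
  have hsign : (-1 : ℂ) ^ m = (-1) ^ k * (-1) ^ (m - k) := by
    rw [← pow_add, Nat.add_sub_cancel' hk]
  rw [Nat.add_sub_cancel, Nat.sub_sub_self hk, Nat.cast_mul,
    Nat.descFactorial_eq_factorial_mul_choose, neg_pow x, ← hfac, hsign]
  have hsq : ((-1 : ℂ) ^ (m - k)) ^ 2 = 1 := by
    rw [← pow_mul, mul_comm, pow_mul, neg_one_sq, one_pow]
  have hfac_ne : ((m - k).factorial : ℂ) ≠ 0 := Nat.cast_ne_zero.mpr (Nat.factorial_ne_zero _)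
  push_cast
  field_simp
  rw [hsq]
  ring

theorem ProbabilityTheory.iIndepFun.integrable_fun_prod {Ω ι R : Type*} [MeasurableSpace Ω]
    {μ : Measure Ω} [Fintype ι] [NormedCommRing R] [NormMulClass R] [NormOneClass R]
    [MeasurableSpace R] [BorelSpace R] {X : ι → Ω → R} (hX : iIndepFun X μ)
    (hmeas : ∀ i, Measurable (X i)) (hint : ∀ i, Integrable (X i) μ) :
    Integrable (fun ω => ∏ i, X i ω) μ := by
  refine ⟨Finset.aestronglyMeasurable_fun_prod _ fun i _ => (hint i).1, ?_⟩
  have hnorm : iIndepFun (fun i ω => ‖X i ω‖ₑ) μ := hX.comp (fun _ x => ‖x‖ₑ) fun _ => by fun_prop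
  have hprod (ω : Ω) : ‖∏ i, X i ω‖ₑ = ∏ i, ‖X i ω‖ₑ := by
    simp only [enorm_eq_nnnorm, nnnorm_prod, ENNReal.ofNNReal_finsetProd]
  rw [hasFiniteIntegral_iff_enorm, lintegral_congr hprod,
    lintegral_prod_eq_prod_lintegral_of_indepFun _ _ hnorm fun i => (hmeas i).enorm]
  exact ENNReal.prod_lt_top fun i _ => (hint i).2

theorem Fintype.card_filter_injective {α β : Type*} [Fintype α] [DecidableEq α] [Fintype β]
    [DecidableEq β] :
    (Finset.univ.filter fun r : α → β => Function.Injective r).card =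
      (Fintype.card β).descFactorial (Fintype.card α) := by
  rw [← Fintype.card_subtype, Fintype.card_congr (Equiv.subtypeInjectiveEquivEmbedding α β),
    Fintype.card_embedding_eq]

-- Spreads the product over all entries `(i, k)`, so that independence of the entries applies.
theorem Fintype.prod_star_mul_eq_prod_pairs {R ρ κ : Type*} [CommMonoid R] [Star R] [Fintype ρ]
    [Fintype κ] [DecidableEq ρ] (Y : ρ → κ → R) (a b : κ → ρ) :
    ∏ k, star (Y (a k) k) * Y (b k) k =
      ∏ p : ρ × κ, (if a p.2 = p.1 then star (Y p.1 p.2) else 1) *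
        (if b p.2 = p.1 then Y p.1 p.2 else 1) := by
  rw [Fintype.prod_prod_type_right]
  refine Finset.prod_congr rfl fun k _ => ?_
  simp only [Finset.prod_mul_distrib, Finset.prod_ite_eq, Finset.mem_univ, if_true]

theorem integral_ite_star_mul_ite {Ω : Type*} [MeasurableSpace Ω] {μ : Measure Ω}
    [IsProbabilityMeasure μ] {Y : Ω → ℂ} (hmean : ∫ ω, Y ω ∂μ = 0)
    (hvar : ∫ ω, ‖Y ω‖ ^ 2 ∂μ = 1) (c d : Prop) [Decidable c] [Decidable d] :
    ∫ ω, (if c then star (Y ω) else 1) * (if d then Y ω else 1) ∂μ =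
      if c ↔ d then 1 else 0 := by
  by_cases hc : c <;> by_cases hd : d <;>
    simp only [hc, hd, if_true, if_false, iff_self, true_iff, iff_true, one_mul, mul_one]
  · simp_rw [Complex.star_def, Complex.conj_mul', ← Complex.ofReal_pow]
    rw [integral_complex_ofReal, hvar, Complex.ofReal_one]
  · rw [Complex.star_def, integral_conj, hmean, map_zero]
  · exact hmean
  · simp

theorem measurable_ite_star_mul_ite (c d : Prop) [Decidable c] [Decidable d] :
    Measurable fun z : ℂ => (if c then star z else 1) * (if d then z else 1) := by
  split_ifs <;> fun_prop

section GramMatrix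

variable {Ω ρ κ : Type*} [MeasurableSpace Ω] {μ : Measure Ω} [Fintype ρ] [Fintype κ]
  {Z : ρ → κ → Ω → ℂ}

theorem integrable_prod_star_mul (hZ : iIndepFun (fun p : ρ × κ => Z p.1 p.2) μ)
    (hmeas : ∀ i j, Measurable (Z i j)) (hL2 : ∀ i j, MemLp (Z i j) 2 μ) (a b : κ → ρ) :
    Integrable (fun ω => ∏ k, star (Z (a k) k ω) * Z (b k) k ω) μ := by
  classical
  have := hZ.isProbabilityMeasure
  refine Integrable.congr ?_ (ae_of_all _ fun ω =>
    (Fintype.prod_star_mul_eq_prod_pairs (fun i j => Z i j ω) a b).symm)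
  have hfactor (p : ρ × κ) (c : Prop) [Decidable c] (f : ℂ → ℂ) (hf : MemLp (f ∘ Z p.1 p.2) 2 μ) :
      MemLp (fun ω => if c then f (Z p.1 p.2 ω) else 1) 2 μ := by
    split_ifs
    exacts [hf, memLp_const 1]
  have hg (p : ρ × κ) := measurable_ite_star_mul_ite (a p.2 = p.1) (b p.2 = p.1)
  refine iIndepFun.integrable_fun_prod (hZ.comp _ hg) (fun p => (hg p).comp (hmeas p.1 p.2))
    fun p => ?_
  exact (hfactor p _ star (hL2 p.1 p.2).star).integrable_mul (hfactor p _ id (hL2 p.1 p.2))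

theorem integral_prod_star_mul [DecidableEq ρ] (hZ : iIndepFun (fun p : ρ × κ => Z p.1 p.2) μ)
    (hmeas : ∀ i j, Measurable (Z i j)) (hmean : ∀ i j, ∫ ω, Z i j ω ∂μ = 0)
    (hvar : ∀ i j, ∫ ω, ‖Z i j ω‖ ^ 2 ∂μ = 1) (a b : κ → ρ) :
    ∫ ω, ∏ k, star (Z (a k) k ω) * Z (b k) k ω ∂μ = if a = b then 1 else 0 := by
  have := hZ.isProbabilityMeasure
  simp_rw [fun ω => Fintype.prod_star_mul_eq_prod_pairs (fun i j => Z i j ω) a b]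
  have hg (p : ρ × κ) := measurable_ite_star_mul_ite (a p.2 = p.1) (b p.2 = p.1)
  rw [hZ.integral_fun_prod_comp (fun p => (hmeas p.1 p.2).aemeasurable)
      fun p => (hg p).aestronglyMeasurable]
  simp only [integral_ite_star_mul_ite (hmean _ _) (hvar _ _), Fintype.prod_boole]
  congr 1
  exact propext ⟨fun h => funext fun k => (h (b k, k)).mpr rfl, fun h p => by rw [h]⟩

variable [DecidableEq κ]

theorem integrable_det_conjTranspose_mul_self (hZ : iIndepFun (fun p : ρ × κ => Z p.1 p.2) μ)
    (hmeas : ∀ i j, Measurable (Z i j)) (hL2 : ∀ i j, MemLp (Z i j) 2 μ) :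
    Integrable (fun ω => ((of fun i j => Z i j ω)ᴴ * of fun i j => Z i j ω).det) μ := by
  classical
  simp only [det_conjTranspose_mul_self_eq_sum, of_apply]
  exact integrable_finsetSum _ fun σ _ => integrable_finsetSum _ fun r _ =>
    (integrable_prod_star_mul hZ hmeas hL2 _ r).const_mul _

theorem integral_det_conjTranspose_mul_self (hZ : iIndepFun (fun p : ρ × κ => Z p.1 p.2) μ)
    (hmeas : ∀ i j, Measurable (Z i j)) (hL2 : ∀ i j, MemLp (Z i j) 2 μ)
    (hmean : ∀ i j, ∫ ω, Z i j ω ∂μ = 0) (hvar : ∀ i j, ∫ ω, ‖Z i j ω‖ ^ 2 ∂μ = 1) :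
    ∫ ω, ((of fun i j => Z i j ω)ᴴ * of fun i j => Z i j ω).det ∂μ =
      (Fintype.card ρ).descFactorial (Fintype.card κ) := by
  classical
  have hint (σ : Equiv.Perm κ) (r : κ → ρ) := (integrable_prod_star_mul hZ hmeas hL2
    (fun k => r (σ.symm k)) r).const_mul (Equiv.Perm.sign σ : ℂ)
  simp only [det_conjTranspose_mul_self_eq_sum, of_apply]
  rw [integral_finsetSum _ fun σ _ => integrable_finsetSum _ fun r _ => hint σ r]
  simp only [integral_finsetSum _ fun r _ => hint _ r, integral_const_mul,
    integral_prod_star_mul hZ hmeas hmean hvar]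
  rw [Finset.sum_comm]
  simp only [Equiv.Perm.sum_sign_mul_ite_comp_symm_eq, Finset.sum_boole,
    Fintype.card_filter_injective]

theorem integral_det_smul_one_sub_conjTranspose_mul_self
    (hZ : iIndepFun (fun p : ρ × κ => Z p.1 p.2) μ) (hmeas : ∀ i j, Measurable (Z i j))
    (hL2 : ∀ i j, MemLp (Z i j) 2 μ) (hmean : ∀ i j, ∫ ω, Z i j ω ∂μ = 0)
    (hvar : ∀ i j, ∫ ω, ‖Z i j ω‖ ^ 2 ∂μ = 1) (t : ℂ) :
    ∫ ω, (t • (1 : Matrix κ κ ℂ) - (of fun i j => Z i j ω)ᴴ * of fun i j => Z i j ω).det ∂μ =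
      ∑ k ∈ Finset.range (Fintype.card κ + 1), (-1) ^ k * t ^ (Fintype.card κ - k) *
        ((Fintype.card κ).choose k * (Fintype.card ρ).descFactorial k : ℕ) := by
  have hminor (s : Finset κ) (ω : Ω) :
      ((of fun i j => Z i j ω)ᴴ * of fun i j => Z i j ω).submatrix (Subtype.val : s → κ)
        Subtype.val = (of fun i (j : s) => Z i j ω)ᴴ * of fun i (j : s) => Z i j ω := by
    ext j k
    simp [mul_apply]
  have hZs (s : Finset κ) : iIndepFun (fun p : ρ × s => Z p.1 p.2) μ :=
    hZ.precomp (g := Prod.map id Subtype.val) (Function.injective_id.prodMap Subtype.val_injective)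
  have hint (s : Finset κ) :=
    integrable_det_conjTranspose_mul_self (Z := fun i (j : s) => Z i j) (hZs s)
      (fun i j => hmeas i j) fun i j => hL2 i j
  simp only [det_smul_one_sub_eq_sum_minors, hminor]
  rw [integral_finsetSum _ fun k _ => (integrable_finsetSum _ fun s _ => hint s).const_mul _]
  refine Finset.sum_congr rfl fun k _ => ?_
  rw [integral_const_mul, integral_finsetSum _ fun s _ => hint s]
  have hcard (s : Finset κ) (hs : s ∈ Finset.univ.powersetCard k) : Fintype.card s = k := by
    rw [Fintype.card_coe, (Finset.mem_powersetCard.mp hs).2]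
  rw [Finset.sum_congr rfl fun s hs => by
    rw [integral_det_conjTranspose_mul_self (Z := fun i (j : s) => Z i j) (hZs s)
      (fun i j => hmeas i j) (fun i j => hL2 i j) (fun i j => hmean i j) fun i j => hvar i j,
      hcard s hs]]
  simp [Finset.card_powersetCard]

end GramMatrix

section ComplexLaw

variable {Q : Measure ℝ}

theorem memLp_id_complexLaw [IsFiniteMeasure Q] (hQ : MemLp id 2 Q) :
    MemLp id 2 (complexLaw Q) := by
  have h : MemLp (fun x : ℝ => (x : ℂ)) 2 Q := hQ.ofReal
  refine (memLp_map_measure_iff aestronglyMeasurable_id (by fun_prop)).mpr ?_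
  exact (h.comp_fst Q).add ((h.comp_snd Q).mul_const Complex.I)

variable [IsProbabilityMeasure Q]

theorem integral_id_complexLaw (hQ : Integrable id Q) :
    ∫ z, z ∂complexLaw Q = (∫ x, x ∂Q) * (1 + Complex.I) := by
  rw [complexLaw, integral_map (f := fun z => z) (by fun_prop) aestronglyMeasurable_id,
    integral_add (hQ.ofReal.comp_fst Q) ((hQ.ofReal.comp_snd Q).mul_const _),
    integral_mul_const, integral_fun_fst (f := fun x : ℝ => (x : ℂ)),
    integral_fun_snd (f := fun x : ℝ => (x : ℂ)), integral_complex_ofReal]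
  simp only [probReal_univ, one_smul]
  ring

theorem integral_norm_sq_complexLaw (hQ : Integrable (fun x => x ^ 2) Q) :
    ∫ z, ‖z‖ ^ 2 ∂complexLaw Q = 2 * ∫ x, x ^ 2 ∂Q := by
  rw [complexLaw, integral_map (by fun_prop) (by fun_prop)]
  simp only [Complex.sq_norm, Complex.normSq_add_mul_I]
  rw [integral_add (hQ.comp_fst Q) (hQ.comp_snd Q), integral_fun_fst (f := fun x : ℝ => x ^ 2),
    integral_fun_snd (f := fun x : ℝ => x ^ 2)]
  simp only [probReal_univ, one_smul]
  ring

end ComplexLaw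

theorem expected_charpoly_complex_sample_covariance_general
    (Q : Measure ℝ) [IsProbabilityMeasure Q]
    (hmean : ∫ x, x ∂Q = 0) (hvar : ∫ x, x ^ 2 ∂Q = 1 / 2)
    (Ω : Type) [MeasureSpace Ω]
    (X : ℕ → ℕ → Ω → ℂ) (hmeas : ∀ i j, Measurable (X i j))
    (hindep : iIndepFun (m := fun _ : ℕ × ℕ => Complex.measurableSpace)
      (fun p ω => X p.1 p.2 ω) ℙ)
    (hdist : ∀ i j, Measure.map (X i j) ℙ = complexLaw Q) :
    ∀ n m : ℕ, m ≤ n → ∀ lam : ℂ,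
      (∫ ω, (lam • (1 : Matrix (Fin m) (Fin m) ℂ)
          - (entryMat X n m ω)ᴴ * entryMat X n m ω).det ∂ℙ)
        = (-1) ^ m * (m.factorial : ℂ) * laguerre m (n - m) lam := by
  intro n m hmn lam
  have hsq : Integrable (fun x => x ^ 2) Q := .of_integral_ne_zero (by rw [hvar]; norm_num)
  have hQ : MemLp id 2 Q := (memLp_two_iff_integrable_sq aestronglyMeasurable_id).mpr hsq
  have hlaw (i j : ℕ) : HasLaw (X i j) (complexLaw Q) ℙ := ⟨(hmeas i j).aemeasurable, hdist i j⟩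
  have hL2 (i j : ℕ) : MemLp (X i j) 2 ℙ :=
    (memLp_map_measure_iff aestronglyMeasurable_id (hmeas i j).aemeasurable).mp
      (by rw [hdist]; exact memLp_id_complexLaw hQ)
  have hmeanX (i j : ℕ) : ∫ ω, X i j ω ∂ℙ = 0 := by
    rw [(hlaw i j).integral_eq, integral_id_complexLaw (hQ.integrable one_le_two), hmean,
      Complex.ofReal_zero, zero_mul]
  have hvarX (i j : ℕ) : ∫ ω, ‖X i j ω‖ ^ 2 ∂ℙ = 1 := by
    rw [← Function.comp_def (fun z : ℂ => ‖z‖ ^ 2), (hlaw i j).integral_comp (by fun_prop),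
      integral_norm_sq_complexLaw hsq, hvar]
    norm_num
  have hZ : iIndepFun (fun p : Fin n × Fin m => X p.1 p.2) ℙ :=
    hindep.precomp (g := Prod.map Fin.val Fin.val) (Fin.val_injective.prodMap Fin.val_injective)
  rw [neg_one_pow_mul_factorial_mul_laguerre hmn]
  simpa only [Fintype.card_fin, entryMat] using integral_det_smul_one_sub_conjTranspose_mul_self
    (Z := fun (i : Fin n) (j : Fin m) => X i j) hZ (fun i j => hmeas i j) (fun i j => hL2 i j)
    (fun i j => hmeanX i j) (fun i j => hvarX i j) lam

/-- For `n ≥ m ≥ 0` and `λ ∈ ℂ`,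
`E det(λ I_m − X(n,m)* X(n,m)) = (−1)^m · m! · L_m^{(n−m)}(λ)`. -/
theorem expected_charpoly_complex_sample_covariance
    (Q : Measure ℝ) [IsProbabilityMeasure Q] (b : ℝ)
    (hmean : ∫ x, x ∂Q = 0) (hvar : ∫ x, x ^ 2 ∂Q = 1 / 2) (hfourth : ∫ x, x ^ 4 ∂Q = b)
    (Ω : Type) [MeasureSpace Ω] [IsProbabilityMeasure (ℙ : Measure Ω)]
    (X : ℕ → ℕ → Ω → ℂ) (hmeas : ∀ i j, Measurable (X i j))
    (hindep : iIndepFun (m := fun _ : ℕ × ℕ => Complex.measurableSpace)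
      (fun p ω => X p.1 p.2 ω) ℙ)
    (hdist : ∀ i j, Measure.map (X i j) ℙ = complexLaw Q) :
    ∀ n m : ℕ, m ≤ n → ∀ lam : ℂ,
      (∫ ω, (lam • (1 : Matrix (Fin m) (Fin m) ℂ)
          - (entryMat X n m ω)ᴴ * entryMat X n m ω).det ∂ℙ)
        = (-1) ^ m * (m.factorial : ℂ) * laguerre m (n - m) lam :=
  expected_charpoly_complex_sample_covariance_general Q hmean hvar Ω X hmeas hindep hdist
end
end

section
/- For all n ≥ m ≥ 0 and all λ ∈ ℂ, the first moment of the characteristic polynomial of the unrescaled real sample covariance matrix satisfies E det(λ I_m − X(n,m)ᵀ X(n,m)) = (−1)^m · m! · L_m^{(n−m)}(λ). -/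
open MeasureTheory ProbabilityTheory Matrix

noncomputable section

/-- The `n × m` upper-left corner complex matrix built from a doubly-indexed family of real
entries. -/
def entryMatC {Ω : Type*} (X : ℕ → ℕ → Ω → ℝ) (n m : ℕ) (ω : Ω) :
    Matrix (Fin n) (Fin m) ℂ :=
  Matrix.of fun i j => (X i j ω : ℂ)

/-!
Write `λ I - XᵀX = λ I - ∑ᵢ xᵢ xᵢᵀ`, with `xᵢ` the rows of `X`, and expand the determinant
multilinearly in its rows: each row `p` contributes either `λ e_p` or `-X_{ip} xᵢ`, so the
determinant is a sum over maps `g : Fin m → Option (Fin n)`. In the Leibniz expansion of each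
summand a term is, up to a constant, `∏_p X_{g p, p} X_{g p, σ p}`; every entry occurs at most
twice, so by independence, mean `0` and variance `1` its expectation is `1` if `g ∘ σ = g` and `0`
otherwise. Hence each summand has the expectation of a deterministic determinant, which is
`(-1)^k λ^(m-k)` when `g` is injective on its support of size `k` and `0` otherwise. There are
`C(m, k) · n!/(n-k)!` such `g`, and `∑ₖ C(m, k) n!/(n-k)! (-1)^k λ^(m-k) = (-1)^m m! L_m^(n-m)(λ)`.
-/

open Finset

section Independence

variable {Ω ι : Type*} [MeasurableSpace Ω] {μ : Measure Ω} {Y : ι → Ω → ℝ}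

lemma ProbabilityTheory.iIndepFun.integrable_finsetProd (hY : iIndepFun Y μ)
    (hmeas : ∀ i, Measurable (Y i)) (hint : ∀ i, Integrable (Y i) μ) (s : Finset ι) :
    Integrable (fun ω => ∏ i ∈ s, Y i ω) μ := by
  classical
  have := hY.isProbabilityMeasure
  induction s using Finset.induction_on with
  | empty => simp
  | insert i s hi ih =>
    simp_rw [prod_insert hi]
    simp_rw [← prod_apply] at ih ⊢
    exact (hY.indepFun_finsetProd_of_notMem hmeas hi).symm.integrable_mul (hint i) ih

lemma ProbabilityTheory.iIndepFun.integral_finsetProd (hY : iIndepFun Y μ)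
    (hmeas : ∀ i, Measurable (Y i)) (s : Finset ι) :
    ∫ ω, ∏ i ∈ s, Y i ω ∂μ = ∏ i ∈ s, ∫ ω, Y i ω ∂μ := by
  have := (hY.precomp Subtype.val_injective (g := ((↑) : s → ι))).integral_fun_prod_eq_prod_integral
    fun i => (hmeas i).aestronglyMeasurable
  simp_rw [← prod_coe_sort s]
  exact this

lemma prod_mul_prod_eq_prod_union_pow {M : Type*} [CommMonoid M] [DecidableEq ι] (f : ι → M)
    (A B : Finset ι) :
    (∏ i ∈ A, f i) * ∏ i ∈ B, f i = ∏ i ∈ A ∪ B, f i ^ (if i ∈ A ∧ i ∈ B then 2 else 1) := calc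
  _ = (∏ i ∈ A ∪ B, if i ∈ A then f i else 1) * ∏ i ∈ A ∪ B, if i ∈ B then f i else 1 := by
    rw [prod_ite_mem, prod_ite_mem, union_inter_cancel_left, union_inter_cancel_right]
  _ = _ := by
    rw [← prod_mul_distrib]
    refine prod_congr rfl fun i hi => ?_
    rw [mem_union] at hi
    split_ifs <;> simp_all [sq]

theorem ProbabilityTheory.iIndepFun.integral_prod_mul_prod [DecidableEq ι] (hY : iIndepFun Y μ)
    (hmeas : ∀ i, Measurable (Y i)) (hmean : ∀ i, ∫ ω, Y i ω ∂μ = 0)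
    (hvar : ∀ i, ∫ ω, Y i ω ^ 2 ∂μ = 1) (A B : Finset ι) :
    Integrable (fun ω => (∏ i ∈ A, Y i ω) * ∏ i ∈ B, Y i ω) μ ∧
      ∫ ω, (∏ i ∈ A, Y i ω) * ∏ i ∈ B, Y i ω ∂μ = if A = B then 1 else 0 := by
  have := hY.isProbabilityMeasure
  set k : ι → ℕ := fun i => if i ∈ A ∧ i ∈ B then 2 else 1
  have hind : iIndepFun (fun i ω => Y i ω ^ k i) μ :=
    hY.comp (fun i x => x ^ k i) fun i => measurable_id.pow_const _
  have hmeas' (i : ι) : Measurable fun ω => Y i ω ^ k i := (hmeas i).pow_const _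
  have hint (i : ι) : Integrable (fun ω => Y i ω ^ k i) μ := by
    have hsq := integrable_of_integral_eq_one (hvar i)
    by_cases h : i ∈ A ∧ i ∈ B
    · simpa [k, h] using hsq
    · simpa [k, h] using
        ((memLp_two_iff_integrable_sq (hmeas i).aestronglyMeasurable).2 hsq).integrable one_le_two
  have hmom (i : ι) : ∫ ω, Y i ω ^ k i ∂μ = if i ∈ A ∧ i ∈ B then 1 else 0 := by
    by_cases h : i ∈ A ∧ i ∈ B <;> simp [k, h, hmean, hvar]
  simp_rw [prod_mul_prod_eq_prod_union_pow]
  refine ⟨hind.integrable_finsetProd hmeas' hint _, ?_⟩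
  rw [hind.integral_finsetProd hmeas', prod_congr rfl fun i _ => hmom i, prod_boole]
  congr 1
  simp only [mem_union, Finset.ext_iff]
  grind

end Independence

section RowExpansion

variable {R ι κ : Type*} [CommRing R] [Fintype ι] [Fintype κ]

def optionGraph [DecidableEq ι] (g : κ → Option ι) : Finset (ι × κ) :=
  univ.filter fun e => g e.2 = some e.1

lemma optionGraph_injective [DecidableEq ι] :
    Function.Injective (optionGraph (ι := ι) (κ := κ)) := by
  intro g g' h
  funext p
  refine Option.ext fun i => ?_
  simpa [optionGraph] using Finset.ext_iff.1 h (i, p)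

lemma prod_optionGraph [DecidableEq ι] {M : Type*} [CommMonoid M] (g : κ → Option ι)
    (f : ι × κ → M) :
    ∏ e ∈ optionGraph g, f e = ∏ p, (g p).elim 1 fun i => f (i, p) := by
  rw [optionGraph, prod_filter, Fintype.prod_prod_type_right]
  refine prod_congr rfl fun p _ => ?_
  rcases h : g p with _ | i <;> simp [h]

variable [DecidableEq κ]

/-- Row `p` of `lam • 1 - xᵀ * x` is the sum of these rows over `o : Option ι`. -/
def rowTerm (x : Matrix ι κ R) (lam : R) (p : κ) (o : Option ι) : κ → R :=
  o.elim ((lam • (1 : Matrix κ κ R)) p) fun i => -(x i p • x i)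

lemma det_smul_one_sub_transpose_mul_self (x : Matrix ι κ R) (lam : R) :
    (lam • (1 : Matrix κ κ R) - xᵀ * x).det =
      ∑ g : κ → Option ι, (of fun p => rowTerm x lam p (g p)).det := by
  have hrows : lam • (1 : Matrix κ κ R) - xᵀ * x = of fun p => ∑ o, rowTerm x lam p o := by
    ext p q
    simp [rowTerm, Fintype.sum_option, mul_apply, sub_eq_add_neg]
  rw [hrows]
  exact (detRowAlternating (R := R) (n := κ)).toMultilinearMap.map_sum _

lemma prod_rowTerm [DecidableEq ι] (x : Matrix ι κ R) (lam : R) (g : κ → Option ι)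
    (σ : Equiv.Perm κ) :
    ∏ p, rowTerm x lam p (g p) (σ p) =
      (∏ p, (g p).elim ((lam • (1 : Matrix κ κ R)) p (σ p)) fun _ => -1) *
        ((∏ e ∈ optionGraph g, x e.1 e.2) * ∏ e ∈ optionGraph (g ∘ σ.symm), x e.1 e.2) := by
  rw [prod_optionGraph, prod_optionGraph,
    ← Equiv.prod_comp σ fun q => ((g ∘ σ.symm) q).elim 1 fun i => x i q, ← prod_mul_distrib,
    ← prod_mul_distrib]
  refine prod_congr rfl fun p _ => ?_
  rcases h : g p with _ | i <;> simp [rowTerm, h]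

end RowExpansion

section ExpectedTerm

variable {R ι κ : Type*} [CommRing R] [DecidableEq ι] [Fintype κ] [DecidableEq κ]

/-- Its Leibniz products are the expectations of those of `of fun p => rowTerm x lam p (g p)`
for a matrix `x` of independent standardized entries (`integral_prod_rowTerm`). -/
def expectedTermMatrix (lam : R) (g : κ → Option ι) : Matrix κ κ R :=
  of fun p q => (g p).elim ((lam • (1 : Matrix κ κ R)) p q) fun _ => if g q = g p then -1 else 0

lemma prod_expectedTermMatrix (lam : R) (g : κ → Option ι) (σ : Equiv.Perm κ) :
    ∏ p, expectedTermMatrix lam g p (σ p) =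
      (∏ p, (g p).elim ((lam • (1 : Matrix κ κ R)) p (σ p)) fun _ => -1) *
        if g = g ∘ σ.symm then 1 else 0 := by
  split_ifs with h
  · rw [mul_one]
    refine prod_congr rfl fun p _ => ?_
    have hp : g (σ p) = g p := by simpa using congrFun h (σ p)
    rcases hgp : g p with _ | i <;> simp [expectedTermMatrix, hgp, hp]
  · rw [mul_zero]
    obtain ⟨q, hq⟩ := Function.ne_iff.1 h
    obtain ⟨p, hp⟩ : ∃ p, g (σ p) ≠ g p := ⟨σ.symm q, by simpa [eq_comm] using hq⟩
    refine prod_eq_zero (mem_univ p) ?_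
    have hσp : p ≠ σ p := fun h' => hp (h' ▸ rfl)
    rcases hgp : g p with _ | i <;> simp_all [expectedTermMatrix]

open Classical in
lemma det_expectedTermMatrix (lam : R) (g : κ → Option ι) :
    (expectedTermMatrix lam g).det =
      if Set.InjOn g {p | (g p).isSome} then ∏ p, (g p).elim lam fun _ => -1 else 0 := by
  split_ifs with h
  · have hdiag : expectedTermMatrix lam g = diagonal fun p => (g p).elim lam fun _ => -1 := by
      ext p q
      by_cases hpq : p = q
      · subst hpq
        rcases g p with _ | i <;> simp [expectedTermMatrix]
      · rw [diagonal_apply_ne _ hpq]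
        rcases hgp : g p with _ | i
        · simp [expectedTermMatrix, hgp, hpq]
        · have hgq : g q ≠ some i := fun hq =>
            hpq (h (by simp [hgp]) (by simp [hq]) (hgp.trans hq.symm))
          simp [expectedTermMatrix, hgp, hgq]
    rw [hdiag, det_diagonal]
  · obtain ⟨p, hp, q, -, hpq, hne⟩ :
        ∃ p ∈ {p | (g p).isSome}, ∃ q ∈ {p | (g p).isSome}, g p = g q ∧ p ≠ q := by
      simpa [Set.InjOn] using h
    obtain ⟨i, hi⟩ := Option.isSome_iff_exists.1 hp
    refine det_zero_of_row_eq hne (funext fun r => ?_)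
    simp [expectedTermMatrix, hi, ← hpq]

end ExpectedTerm

section Counting

variable {ι κ : Type*} [Fintype ι] [DecidableEq ι] [Fintype κ] [DecidableEq κ]

def partialInjEquivEmbedding (s : Finset κ) :
    {g : κ → Option ι // (∀ p, (g p).isSome ↔ p ∈ s) ∧ Set.InjOn g s} ≃ (s ↪ ι) where
  toFun g := ⟨fun p => (g.1 p).get ((g.2.1 p).2 p.2), fun p q hpq =>
    Subtype.ext (g.2.2 p.2 q.2 (by simpa using congrArg some hpq))⟩
  invFun e := ⟨fun p => if h : p ∈ s then some (e ⟨p, h⟩) else none, fun p => by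
    by_cases h : p ∈ s <;> simp [h], fun p hp q hq hpq => by
    simpa [mem_coe.1 hp, mem_coe.1 hq] using hpq⟩
  left_inv g := by
    ext1; funext p
    by_cases h : p ∈ s
    · simp only [h, dif_pos]
      exact Option.some_get _
    · simpa [h] using (Option.not_isSome_iff_eq_none.1 ((g.2.1 p).not.2 h)).symm
  right_inv e := by ext p; simp

open Classical in
lemma card_filter_support_eq_injOn (s : Finset κ) :
    #{g : κ → Option ι | ({p | (g p).isSome} : Finset κ) = s ∧ Set.InjOn g {p | (g p).isSome}} =
      (Fintype.card ι).descFactorial #s := by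
  rw [← Fintype.card_subtype, ← Fintype.card_coe s, ← Fintype.card_embedding_eq,
    ← Fintype.card_congr (partialInjEquivEmbedding s)]
  refine Fintype.card_congr (Equiv.subtypeEquivRight fun g => ?_)
  have hsupp : ({p | (g p).isSome} : Finset κ) = s ↔ ∀ p, (g p).isSome ↔ p ∈ s := by
    simp [Finset.ext_iff]
  rw [hsupp]
  refine and_congr_right fun h => ?_
  rw [show {p | (g p).isSome} = (s : Set κ) from Set.ext h]

open Classical in
lemma sum_ite_injOn_support {M : Type*} [AddCommMonoid M] (f : ℕ → M) :
    ∑ g : κ → Option ι,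
        (if Set.InjOn g {p | (g p).isSome} then f #{p | (g p).isSome} else 0) =
      ∑ k ∈ range (Fintype.card κ + 1),
        ((Fintype.card κ).choose k * (Fintype.card ι).descFactorial k) • f k := by
  have hfiber (s : Finset κ) : ∑ g : κ → Option ι with ({p | (g p).isSome} : Finset κ) = s,
      (if Set.InjOn g {p | (g p).isSome} then f #{p | (g p).isSome} else 0) =
        (Fintype.card ι).descFactorial #s • f #s := by
    rw [sum_ite, sum_const_zero, add_zero, filter_filter, ← card_filter_support_eq_injOn,
      ← sum_const]
    exact sum_congr rfl fun g hg => by rw [(mem_filter.1 hg).2.1]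
  rw [← sum_fiberwise univ fun g : κ → Option ι => ({p | (g p).isSome} : Finset κ),
    sum_congr rfl fun s _ => hfiber s, ← powerset_univ,
    sum_powerset_apply_card fun k => (Fintype.card ι).descFactorial k • f k]
  simp [mul_smul]

end Counting

lemma prod_option_elim_const {ι κ M : Type*} [Fintype κ] [CommMonoid M] (g : κ → Option ι)
    (a b : M) :
    ∏ p, (g p).elim a (fun _ => b) =
      b ^ #{p | (g p).isSome} * a ^ (Fintype.card κ - #{p | (g p).isSome}) := by
  have hite (p : κ) : (g p).elim a (fun _ => b) = if (g p).isSome then b else a := by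
    cases g p <;> rfl
  have hcompl := card_filter_add_card_filter_not (s := univ) fun p => (g p).isSome
  rw [card_univ] at hcompl
  simp_rw [hite, prod_ite, prod_const]
  congr 2
  omega

lemma sum_det_expectedTermMatrix {R ι κ : Type*} [CommRing R] [Fintype ι] [DecidableEq ι]
    [Fintype κ] [DecidableEq κ] (lam : R) :
    ∑ g : κ → Option ι, (expectedTermMatrix lam g).det =
      ∑ k ∈ range (Fintype.card κ + 1),
        ((Fintype.card κ).choose k * (Fintype.card ι).descFactorial k : R) * (-1) ^ k *
          lam ^ (Fintype.card κ - k) := by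
  simp_rw [det_expectedTermMatrix, prod_option_elim_const]
  rw [sum_ite_injOn_support fun k => (-1 : R) ^ k * lam ^ (Fintype.card κ - k)]
  simp [nsmul_eq_mul, mul_assoc]

lemma sum_choose_mul_descFactorial_eq_laguerre (lam : ℂ) {m n : ℕ} (h : m ≤ n) :
    ∑ k ∈ range (m + 1), (m.choose k * n.descFactorial k : ℂ) * (-1) ^ k * lam ^ (m - k) =
      (-1) ^ m * (m.factorial : ℂ) * laguerre m (n - m) lam := by
  rw [laguerre, Nat.add_sub_cancel' h, mul_sum]
  conv_rhs => rw [← sum_range_reflect]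
  refine sum_congr rfl fun k hk => ?_
  have hkm : k ≤ m := Nat.lt_succ_iff.1 (mem_range.1 hk)
  rw [show m + 1 - 1 - k = m - k by omega, Nat.sub_sub_self hkm]
  have hcoeff : (m.choose k * n.descFactorial k * (m - k).factorial : ℂ) =
      m.factorial * n.choose k := by
    rw [Nat.descFactorial_eq_factorial_mul_choose, ← Nat.choose_mul_factorial_mul_factorial hkm]
    push_cast
    ring
  have hsign : (-1 : ℂ) ^ m * (-lam) ^ (m - k) = (-1) ^ k * lam ^ (m - k) := by
    rw [neg_pow lam, ← mul_assoc, ← pow_add, show m + (m - k) = k + 2 * (m - k) by omega, pow_add,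
      pow_mul]
    simp
  have hfac : ((m - k).factorial : ℂ) ≠ 0 := Nat.cast_ne_zero.2 (Nat.factorial_ne_zero _)
  rw [mul_div_assoc', eq_div_iff hfac]
  linear_combination (-1 : ℂ) ^ k * lam ^ (m - k) * hcoeff - m.factorial * n.choose k * hsign

section RandomMatrix

variable {Ω ι κ : Type*} [MeasurableSpace Ω] {μ : Measure Ω}

lemma integral_det_of_integral_prod [Fintype κ] [DecidableEq κ] {M : Ω → Matrix κ κ ℂ}
    {W : Matrix κ κ ℂ}
    (h : ∀ σ : Equiv.Perm κ, Integrable (fun ω => ∏ p, M ω p (σ p)) μ ∧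
      ∫ ω, ∏ p, M ω p (σ p) ∂μ = ∏ p, W p (σ p)) :
    Integrable (fun ω => (M ω).det) μ ∧ ∫ ω, (M ω).det ∂μ = W.det := by
  have hdet (N : Matrix κ κ ℂ) : N.det = ∑ σ : Equiv.Perm κ, (σ.sign : ℂ) * ∏ p, N p (σ p) := by
    rw [← det_transpose, det_apply']
    rfl
  simp_rw [hdet]
  refine ⟨integrable_finsetSum _ fun σ _ => (h σ).1.const_mul _, ?_⟩
  rw [integral_finsetSum _ fun σ _ => (h σ).1.const_mul _]
  exact sum_congr rfl fun σ _ => by rw [integral_const_mul, (h σ).2]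

variable [Fintype ι] [DecidableEq ι] [Fintype κ] [DecidableEq κ] {Y : ι × κ → Ω → ℝ}

lemma integral_prod_rowTerm (hY : iIndepFun Y μ) (hmeas : ∀ e, Measurable (Y e))
    (hmean : ∀ e, ∫ ω, Y e ω ∂μ = 0) (hvar : ∀ e, ∫ ω, Y e ω ^ 2 ∂μ = 1) (lam : ℂ)
    (g : κ → Option ι) (σ : Equiv.Perm κ) :
    Integrable (fun ω => ∏ p, rowTerm (of fun i p => (Y (i, p) ω : ℂ)) lam p (g p) (σ p)) μ ∧
      ∫ ω, ∏ p, rowTerm (of fun i p => (Y (i, p) ω : ℂ)) lam p (g p) (σ p) ∂μ =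
        ∏ p, expectedTermMatrix lam g p (σ p) := by
  obtain ⟨hint, hval⟩ :=
    hY.integral_prod_mul_prod hmeas hmean hvar (optionGraph g) (optionGraph (g ∘ σ.symm))
  have hcast (ω : Ω) : (∏ e ∈ optionGraph g, (Y (e.1, e.2) ω : ℂ)) *
      ∏ e ∈ optionGraph (g ∘ σ.symm), (Y (e.1, e.2) ω : ℂ) =
        ((∏ e ∈ optionGraph g, Y e ω) * ∏ e ∈ optionGraph (g ∘ σ.symm), Y e ω : ℝ) := by
    push_cast
    rfl
  simp_rw [prod_rowTerm, prod_expectedTermMatrix, of_apply, hcast]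
  refine ⟨hint.ofReal.const_mul _, ?_⟩
  rw [integral_const_mul, integral_complex_ofReal, hval]
  simp only [optionGraph_injective.eq_iff]
  split_ifs <;> simp

theorem integral_det_smul_one_sub_transpose_mul_self (hY : iIndepFun Y μ)
    (hmeas : ∀ e, Measurable (Y e)) (hmean : ∀ e, ∫ ω, Y e ω ∂μ = 0)
    (hvar : ∀ e, ∫ ω, Y e ω ^ 2 ∂μ = 1) (lam : ℂ) :
    ∫ ω, (lam • (1 : Matrix κ κ ℂ) - (of fun i p => (Y (i, p) ω : ℂ))ᵀ *
        of fun i p => (Y (i, p) ω : ℂ)).det ∂μ =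
      ∑ k ∈ range (Fintype.card κ + 1),
        ((Fintype.card κ).choose k * (Fintype.card ι).descFactorial k : ℂ) * (-1) ^ k *
          lam ^ (Fintype.card κ - k) := by
  have hterm (g : κ → Option ι) := integral_det_of_integral_prod
    (M := fun ω => of fun p => rowTerm (of fun i p => (Y (i, p) ω : ℂ)) lam p (g p))
    (integral_prod_rowTerm hY hmeas hmean hvar lam g)
  simp_rw [det_smul_one_sub_transpose_mul_self]
  rw [integral_finsetSum _ fun g _ => (hterm g).1, sum_congr rfl fun g _ => (hterm g).2,
    sum_det_expectedTermMatrix]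

end RandomMatrix

theorem expected_charpoly_real_sample_covariance_general
    (Q : Measure ℝ)
    (hmean : ∫ x, x ∂Q = 0) (hvar : ∫ x, x ^ 2 ∂Q = 1)
    (Ω : Type) [MeasureSpace Ω]
    (X : ℕ → ℕ → Ω → ℝ) (hmeas : ∀ i j, Measurable (X i j))
    (hindep : iIndepFun (m := fun _ : ℕ × ℕ => Real.measurableSpace)
      (fun p ω => X p.1 p.2 ω) ℙ)
    (hdist : ∀ i j, Measure.map (X i j) ℙ = Q) :
    ∀ n m : ℕ, m ≤ n → ∀ lam : ℂ,
      (∫ ω, (lam • (1 : Matrix (Fin m) (Fin m) ℂ)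
          - (entryMatC X n m ω)ᵀ * entryMatC X n m ω).det ∂ℙ)
        = (-1) ^ m * (m.factorial : ℂ) * laguerre m (n - m) lam := by
  intro n m hmn lam
  have hmoment (i j k : ℕ) : ∫ ω, X i j ω ^ k ∂ℙ = ∫ x, x ^ k ∂Q := by
    rw [← hdist i j, integral_map (hmeas i j).aemeasurable (by fun_prop)]
  have hY : iIndepFun (fun e : Fin n × Fin m => X e.1 e.2) ℙ :=
    hindep.precomp (g := fun e : Fin n × Fin m => ((e.1 : ℕ), (e.2 : ℕ)))
      fun e e' h => Prod.ext (Fin.ext (Prod.ext_iff.1 h).1) (Fin.ext (Prod.ext_iff.1 h).2)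
  have hexpansion := integral_det_smul_one_sub_transpose_mul_self hY (fun e => hmeas _ _)
    (fun e => by simpa [hmean] using hmoment e.1 e.2 1) (fun e => (hmoment e.1 e.2 2).trans hvar)
    lam
  rw [Fintype.card_fin, Fintype.card_fin] at hexpansion
  exact hexpansion.trans (sum_choose_mul_descFactorial_eq_laguerre lam hmn)

/-- For `n ≥ m ≥ 0` and `λ ∈ ℂ`, for a real sample covariance matrix,
`E det(λ I_m − X(n,m)ᵀ X(n,m)) = (−1)^m · m! · L_m^{(n−m)}(λ)`. -/
theorem expected_charpoly_real_sample_covariance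
    (Q : Measure ℝ) [IsProbabilityMeasure Q] (b : ℝ)
    (hmean : ∫ x, x ∂Q = 0) (hvar : ∫ x, x ^ 2 ∂Q = 1) (hfourth : ∫ x, x ^ 4 ∂Q = b)
    (Ω : Type) [MeasureSpace Ω] [IsProbabilityMeasure (ℙ : Measure Ω)]
    (X : ℕ → ℕ → Ω → ℝ) (hmeas : ∀ i j, Measurable (X i j))
    (hindep : iIndepFun (m := fun _ : ℕ × ℕ => Real.measurableSpace)
      (fun p ω => X p.1 p.2 ω) ℙ)
    (hdist : ∀ i j, Measure.map (X i j) ℙ = Q) :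
    ∀ n m : ℕ, m ≤ n → ∀ lam : ℂ,
      (∫ ω, (lam • (1 : Matrix (Fin m) (Fin m) ℂ)
          - (entryMatC X n m ω)ᵀ * entryMatC X n m ω).det ∂ℙ)
        = (-1) ^ m * (m.factorial : ℂ) * laguerre m (n - m) lam :=
  expected_charpoly_real_sample_covariance_general Q hmean hvar Ω X hmeas hindep hdist
end
end
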